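/- Let μ be a regular conditional distribution for P given 𝓐 and suppose there is A₀ ∈ 𝓐 with P(A₀) = 1 such that μ(ω) is 0-1 on 𝓐 for all ω ∈ A₀. If Q ≪ P, then any regular conditional distribution ν for Q given 𝓐 satisfies: there exists A' ∈ 𝓐 with Q(A') = 1 and ν(ω) is 0-1 valued on 𝓐 for all ω ∈ A'. -/

import Mathlib

open MeasureTheory MeasurableSpace Set Filter
open scoped ENNReal

/-- A regular conditional distribution for `P` given the sub-σ-field `𝓐`. -/
def IsRCD {Ω : Type*} [m𝓑 : MeasurableSpace Ω] (𝓐 : MeasurableSpace Ω)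
    (P : @Measure Ω m𝓑) (μ : Ω → @Measure Ω m𝓑) : Prop :=
  (∀ ω, IsProbabilityMeasure (μ ω)) ∧
  (∀ B : Set Ω, MeasurableSet[m𝓑] B → Measurable[𝓐] fun ω => μ ω B) ∧
  (∀ B : Set Ω, MeasurableSet[m𝓑] B → ∀ A : Set Ω, MeasurableSet[𝓐] A →
    ∫⁻ ω in A, μ ω B ∂P = P (A ∩ B))

/-!
Let `f = dQ/dP` and `g ω = ∫ f dμ_ω`, a version of `E_P[f | 𝓐]`. The normalized measures
`g(ω)⁻¹ • f μ_ω` satisfy the defining identities of a regular conditional distribution for `Q`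
given `𝓐`. As `𝓑` is countably generated, two such families agree as measures off a `Q`-null
set in `𝓐`, so `ν_ω = g(ω)⁻¹ • f μ_ω ≪ μ_ω` for `Q`-a.e. `ω`, and absolute continuity passes the
0-1 property of `μ_ω` on to `ν_ω`.
-/

lemma ENNReal.inv_mul_mul_cancel_of_le {a b : ℝ≥0∞} (hab : a ≤ b) (hb : b ≠ ∞) :
    b⁻¹ * a * b = a := by
  rcases eq_or_ne b 0 with rfl | hb₀
  · simp [nonpos_iff_eq_zero.1 hab]
  · rw [mul_comm b⁻¹, mul_assoc, ENNReal.inv_mul_cancel hb₀ hb, mul_one]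

namespace MeasureTheory

lemma Measure.AbsolutelyContinuous.apply_eq_zero_or_one {α : Type*} [MeasurableSpace α]
    {μ ν : Measure α} [IsProbabilityMeasure μ] [IsProbabilityMeasure ν] (hνμ : ν ≪ μ)
    {s : Set α} (hs : MeasurableSet s) (hμs : μ s = 0 ∨ μ s = 1) : ν s = 0 ∨ ν s = 1 := by
  rcases hμs with hμs | hμs
  · exact .inl (hνμ hμs)
  · rw [← prob_compl_eq_zero_iff hs] at hμs ⊢
    exact .inr (hνμ hμs)

lemma ae_eq_of_forall_setLIntegral_eq_of_sigmaFinite_trim {Ω : Type*}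
    {m m₀ : MeasurableSpace Ω} {μ : Measure[m₀] Ω} (hm : m ≤ m₀) [SigmaFinite (μ.trim hm)]
    {f g : Ω → ℝ≥0∞} (hf : Measurable[m] f) (hg : Measurable[m] g)
    (hfg : ∀ s, MeasurableSet[m] s → ∫⁻ x in s, f x ∂μ = ∫⁻ x in s, g x ∂μ) : f =ᵐ[μ] g :=
  (ae_eq_condLExp hm μ g hf hfg).trans (ae_eq_condLExp hm μ g hg fun _ _ => rfl).symm

lemma setLIntegral_eq_setLIntegral_mul_of_forall_setLIntegral_eq {Ω : Type*}
    {m m₀ : MeasurableSpace Ω} {P Q : Measure[m₀] Ω} (hm : m ≤ m₀) {g : Ω → ℝ≥0∞}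
    (hg : Measurable[m] g) (hgQ : ∀ s, MeasurableSet[m] s → ∫⁻ x in s, g x ∂P = Q s) {φ : Ω → ℝ≥0∞}
    (hφ : Measurable[m] φ) {s : Set Ω} (hs : MeasurableSet[m] s) :
    ∫⁻ x in s, φ x ∂Q = ∫⁻ x in s, φ x * g x ∂P := by
  have htrim : Q.trim hm = (P.trim hm).withDensity g := @Measure.ext _ m _ _ fun t ht => by
    rw [trim_measurableSet_eq hm ht, withDensity_apply _ ht, setLIntegral_trim hm hg ht, hgQ t ht]
  rw [← setLIntegral_trim hm hφ hs, htrim,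
    setLIntegral_withDensity_eq_setLIntegral_mul _ hg hφ hs, setLIntegral_trim hm (hg.mul hφ) hs]
  simp only [Pi.mul_apply, mul_comm]

section CountablyGenerated

variable {α β : Type*} [MeasurableSpace α] [CountablyGenerated α]

lemma exists_countable_forall_measure_eq_of_forall_apply_eq :
    ∃ C : Set (Set α), C.Countable ∧ (∀ s ∈ C, MeasurableSet s) ∧
      ∀ (μ ν : Measure α) [IsFiniteMeasure μ], (∀ s ∈ C, μ s = ν s) → μ = ν := by
  -- finite intersections of a generating sequence; `F = ∅` gives `univ`
  set C := range fun F : Finset ℕ => ⋂ i ∈ F, natGeneratingSequence α i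
  have hCm : ∀ s ∈ C, MeasurableSet s := by
    rintro _ ⟨F, rfl⟩
    exact .biInter F.countable_toSet fun i _ => measurableSet_natGeneratingSequence i
  have hCgen : ‹MeasurableSpace α› = generateFrom C := by
    refine le_antisymm ?_ (generateFrom_le hCm)
    rw [← generateFrom_natGeneratingSequence α]
    exact generateFrom_mono (range_subset_iff.2 fun n => ⟨{n}, by simp⟩)
  have hCpi : IsPiSystem C := by
    rintro _ ⟨F, rfl⟩ _ ⟨F', rfl⟩ -
    exact ⟨F ∪ F', Finset.set_biInter_inter F F' _⟩
  refine ⟨C, countable_range _, hCm, fun μ ν _ h => ?_⟩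
  exact ext_of_generate_finite C hCgen hCpi h (by simpa using h univ ⟨∅, by simp⟩)

lemma measurableSet_setOf_eq_of_countablyGenerated {_ : MeasurableSpace β}
    {κ η : β → Measure α} [∀ b, IsFiniteMeasure (κ b)] (hκ : Measurable κ) (hη : Measurable η) :
    MeasurableSet {b | κ b = η b} := by
  obtain ⟨C, hCc, hCm, hC⟩ := exists_countable_forall_measure_eq_of_forall_apply_eq (α := α)
  have : {b | κ b = η b} = ⋂ s ∈ C, {b | κ b s = η b s} := by
    ext b
    simpa [mem_iInter₂] using ⟨fun h s _ => h ▸ rfl, hC _ _⟩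
  rw [this]
  exact .biInter hCc fun s hs => measurableSet_eq_fun
    ((Measure.measurable_coe (hCm s hs)).comp hκ) ((Measure.measurable_coe (hCm s hs)).comp hη)

lemma ae_eq_of_forall_ae_apply_eq [MeasurableSpace β] {Q : Measure β}
    {κ η : β → Measure α} [∀ b, IsFiniteMeasure (κ b)]
    (h : ∀ s, MeasurableSet s → ∀ᵐ b ∂Q, κ b s = η b s) : ∀ᵐ b ∂Q, κ b = η b := by
  obtain ⟨C, hCc, hCm, hC⟩ := exists_countable_forall_measure_eq_of_forall_apply_eq (α := α)
  filter_upwards [(ae_ball_iff hCc).2 fun s hs => h s (hCm s hs)] with b hb using hC _ _ hb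

end CountablyGenerated

end MeasureTheory

section NormalizedWithDensity

variable {α β : Type*} [MeasurableSpace α]

noncomputable def normalizedWithDensity (μ : β → Measure α) (f : α → ℝ≥0∞) (b : β) :
    Measure α :=
  (∫⁻ x, f x ∂μ b)⁻¹ • (μ b).withDensity f

variable {μ : β → Measure α} {f : α → ℝ≥0∞}

lemma normalizedWithDensity_apply {s : Set α} (hs : MeasurableSet s) (b : β) :
    normalizedWithDensity μ f b s = (∫⁻ x, f x ∂μ b)⁻¹ * ∫⁻ x in s, f x ∂μ b := by
  rw [normalizedWithDensity, Measure.smul_apply, withDensity_apply _ hs, smul_eq_mul]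

lemma measurable_normalizedWithDensity {_ : MeasurableSpace β} (hμ : Measurable μ)
    (hf : Measurable f) : Measurable (normalizedWithDensity μ f) := by
  refine Measure.measurable_of_measurable_coe _ fun s hs => ?_
  simp_rw [normalizedWithDensity_apply hs, ← lintegral_indicator hs]
  exact ((Measure.measurable_lintegral hf).comp hμ).inv.mul
    ((Measure.measurable_lintegral (hf.indicator hs)).comp hμ)

lemma normalizedWithDensity_absolutelyContinuous (b : β) : normalizedWithDensity μ f b ≪ μ b :=
  (withDensity_absolutelyContinuous _ _).smul_left _

end NormalizedWithDensity

namespace IsRCD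

variable {Ω : Type*} {𝓐 : MeasurableSpace Ω} [MeasurableSpace Ω] {P Q : Measure Ω}
  {μ ν : Ω → Measure Ω}

lemma measurable (hμ : IsRCD 𝓐 P μ) : Measurable[𝓐] μ :=
  @Measure.measurable_of_measurable_coe _ _ _ 𝓐 μ hμ.2.1

lemma restrict_bind (hμ : IsRCD 𝓐 P μ) (h𝓐 : 𝓐 ≤ ‹_›) {A : Set Ω} (hA : MeasurableSet[𝓐] A) :
    (P.restrict A).bind μ = P.restrict A := by
  ext B hB
  rw [Measure.bind_apply hB (hμ.measurable.mono h𝓐 le_rfl).aemeasurable, hμ.2.2 B hB A hA,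
    Measure.restrict_apply hB, inter_comm]

lemma setLIntegral_lintegral (hμ : IsRCD 𝓐 P μ) (h𝓐 : 𝓐 ≤ ‹_›) {A : Set Ω}
    (hA : MeasurableSet[𝓐] A) {f : Ω → ℝ≥0∞} (hf : Measurable f) :
    ∫⁻ ω in A, ∫⁻ x, f x ∂μ ω ∂P = ∫⁻ x in A, f x ∂P := by
  rw [← Measure.lintegral_bind (hμ.measurable.mono h𝓐 le_rfl).aemeasurable hf.aemeasurable,
    hμ.restrict_bind h𝓐 hA]

lemma ae_apply_eq (hν : IsRCD 𝓐 Q ν) (h𝓐 : 𝓐 ≤ ‹_›) [IsFiniteMeasure Q] {κ : Ω → Measure Ω}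
    {B : Set Ω} (hB : MeasurableSet B) (hκ : Measurable[𝓐] fun ω => κ ω B)
    (hκQ : ∀ A, MeasurableSet[𝓐] A → ∫⁻ ω in A, κ ω B ∂Q = Q (A ∩ B)) :
    ∀ᵐ ω ∂Q, ν ω B = κ ω B :=
  ae_eq_of_forall_setLIntegral_eq_of_sigmaFinite_trim h𝓐 (hν.2.1 B hB) hκ
    fun A hA => (hν.2.2 B hB A hA).trans (hκQ A hA).symm

lemma setLIntegral_normalizedWithDensity_rnDeriv (hμ : IsRCD 𝓐 P μ) (h𝓐 : 𝓐 ≤ ‹_›)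
    [SigmaFinite P] [IsFiniteMeasure Q] (hQP : Q ≪ P) {B : Set Ω} (hB : MeasurableSet B)
    {A : Set Ω} (hA : MeasurableSet[𝓐] A) :
    ∫⁻ ω in A, normalizedWithDensity μ (Q.rnDeriv P) ω B ∂Q = Q (A ∩ B) := by
  set f := Q.rnDeriv P
  have hf : Measurable f := Measure.measurable_rnDeriv Q P
  set g : Ω → ℝ≥0∞ := fun ω => ∫⁻ x, f x ∂μ ω
  have hg : Measurable[𝓐] g := (Measure.measurable_lintegral hf).comp hμ.measurable
  have hgQ : ∀ A, MeasurableSet[𝓐] A → ∫⁻ ω in A, g ω ∂P = Q A := fun A hA => by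
    rw [hμ.setLIntegral_lintegral h𝓐 hA hf, Measure.setLIntegral_rnDeriv hQP]
  have hg_lt_top : ∀ᵐ ω ∂P, g ω < ∞ := by
    refine ae_lt_top (hg.mono h𝓐 le_rfl) ?_
    simpa using (hgQ univ .univ).trans_ne (measure_ne_top Q univ)
  have hw : Measurable[𝓐] fun ω => ∫⁻ x in B, f x ∂μ ω := by
    simp_rw [← lintegral_indicator hB]
    exact (Measure.measurable_lintegral (hf.indicator hB)).comp hμ.measurable
  calc ∫⁻ ω in A, normalizedWithDensity μ f ω B ∂Q
      = ∫⁻ ω in A, (g ω)⁻¹ * (∫⁻ x in B, f x ∂μ ω) * g ω ∂P := by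
        simp_rw [normalizedWithDensity_apply hB]
        exact setLIntegral_eq_setLIntegral_mul_of_forall_setLIntegral_eq h𝓐 hg hgQ
          (hg.inv.mul hw) hA
    _ = ∫⁻ ω in A, ∫⁻ x in B, f x ∂μ ω ∂P :=
        setLIntegral_congr_fun_ae (h𝓐 A hA) <| hg_lt_top.mono fun ω hω _ =>
          ENNReal.inv_mul_mul_cancel_of_le (setLIntegral_le_lintegral _ _) hω.ne
    _ = ∫⁻ x in A, B.indicator f x ∂P := by
        simp_rw [← lintegral_indicator hB]
        exact hμ.setLIntegral_lintegral h𝓐 hA (hf.indicator hB)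
    _ = Q (A ∩ B) := by
        rw [lintegral_indicator hB, Measure.restrict_restrict hB,
          Measure.setLIntegral_rnDeriv hQP, inter_comm]

end IsRCD

/-- The 0-1 law on 𝓐 is preserved under an absolutely continuous change
of probability measure. -/
theorem stmt_10 {Ω : Type*} [m𝓑 : MeasurableSpace Ω] [CountablyGenerated Ω]
    (P Q : @Measure Ω m𝓑) (hP : IsProbabilityMeasure P) (hQprob : IsProbabilityMeasure Q)
    (𝓐 : MeasurableSpace Ω) (h𝓐 : 𝓐 ≤ m𝓑)
    (μ : Ω → @Measure Ω m𝓑) (hμ : @IsRCD Ω m𝓑 𝓐 P μ)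
    (A₀ : Set Ω) (hA₀ : MeasurableSet[𝓐] A₀) (hA₀1 : P A₀ = 1)
    (h01 : ∀ ω ∈ A₀, ∀ A : Set Ω, MeasurableSet[𝓐] A → μ ω A = 0 ∨ μ ω A = 1)
    (habs : Q ≪ P)
    (ν : Ω → @Measure Ω m𝓑) (hν : @IsRCD Ω m𝓑 𝓐 Q ν) :
    ∃ A' : Set Ω, MeasurableSet[𝓐] A' ∧ Q A' = 1 ∧
      ∀ ω ∈ A', ∀ A : Set Ω, MeasurableSet[𝓐] A → ν ω A = 0 ∨ ν ω A = 1 := by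
  -- `𝓐` is a `MeasurableSpace Ω` in context too; make `m𝓑` the instance found by default
  let := m𝓑
  have := hμ.1
  have := hν.1
  set ν' := normalizedWithDensity μ (Q.rnDeriv P)
  have hν'm : Measurable[𝓐] ν' :=
    measurable_normalizedWithDensity hμ.measurable (Measure.measurable_rnDeriv Q P)
  have hνν' : ∀ᵐ ω ∂Q, ν ω = ν' ω := by
    refine ae_eq_of_forall_ae_apply_eq fun B hB => hν.ae_apply_eq h𝓐 hB
      ((Measure.measurable_coe hB).comp hν'm) fun A hA => ?_
    exact hμ.setLIntegral_normalizedWithDensity_rnDeriv h𝓐 habs hB hA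
  have hA₀Q : ∀ᵐ ω ∂Q, ω ∈ A₀ :=
    habs.ae_le ((ae_mem_iff_measure_eq (h𝓐 _ hA₀).nullMeasurableSet).2 (by simp [hA₀1]))
  have hA' : MeasurableSet[𝓐] (A₀ ∩ {ω | ν ω = ν' ω}) :=
    hA₀.inter (measurableSet_setOf_eq_of_countablyGenerated hν.measurable hν'm)
  refine ⟨_, hA', ?_, ?_⟩
  · rw [← measure_univ (μ := Q), ← ae_mem_iff_measure_eq (h𝓐 _ hA').nullMeasurableSet]
    filter_upwards [hA₀Q, hνν'] with ω h₀ h using ⟨h₀, h⟩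
  · rintro ω ⟨hω₀, hων⟩ A hA
    exact (hων ▸ normalizedWithDensity_absolutelyContinuous ω : ν ω ≪ μ ω).apply_eq_zero_or_one
      (h𝓐 A hA) (h01 ω hω₀ A hA)
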